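/- arXiv:2003.08304 — 3 statements merged into one kernel-verified Lean document; each statement's English description precedes it below -/
import Mathlib

section
/- Let T_N(K) be the K-th order statistic of N i.i.d. shifted exponential variables with rate λ_s > 0 and shift c ≥ 0, and let T_D > c. Conditioning on the event {T_N(K) < T_D}, the conditional expectation of T_N(K) is E[T_N(K) | T_N(K) < T_D] = (1/(1-Z_K)) · Σ_{j=0}^{K-1} (B_{K,j}/(λ_s U_{K,j}²)) · [1 + c λ_s U_{K,j} - (1 + T_D λ_s U_{K,j}) e^{-λ_s U_{K,j}(T_D-c)}], where B_{K,j} = K·binom(N,K)·binom(K-1,j)·(-1)^j, U_{K,j} = N-K+1+j, and Z_K = Σ_{i=0}^{K-1} B_{K,i}·e^{-λ_s U_{K,i}(T_D-c)}/U_{K,i}. -/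
/-!
The `K`-th order statistic is at most `x` exactly when at least `K` of the `N` coordinates are,
so its distribution function is the binomial tail `∑_{m ≥ K} C(N,m) F(x)^m (1 - F(x))^(N-m)`
of the common distribution function `F(t) = 1 - e^{-λ(t-c)}`. The derivative of the binomial
tail telescopes to `K C(N,K) p^(K-1) (1-p)^(N-K)`, which yields the density of the order
statistic; expanding `(1 - e^{-λ(t-c)})^(K-1)` binomially writes this density as
`∑_j B_j λ e^{-λ U_j (t-c)}`. Integrating these exponentials over `(T_D, ∞)` gives
`P(T_N(K) ≥ T_D) = Z`, and integrating `t` against them over `(c, T_D)` gives the numerator.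
-/

open MeasureTheory ProbabilityTheory Real Set
open scoped Finset

noncomputable def shiftedExp (l c : ℝ) : MeasureTheory.Measure ℝ :=
  MeasureTheory.volume.withDensity
    (fun t => ENNReal.ofReal (if c < t then l * Real.exp (-l * (t - c)) else 0))

noncomputable def orderStat {Ω : Type*} {N : ℕ} (T : Fin N → Ω → ℝ) (K : ℕ) (ω : Ω) : ℝ :=
  sInf {x : ℝ | K ≤ Nat.card {i : Fin N // T i ω ≤ x}}

section Measures

variable {α : Type*} [MeasurableSpace α] {μ : Measure α}

lemma withDensity_ofReal_apply_eq_integral {f : α → ℝ} {s : Set α} (hs : MeasurableSet s)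
    (hf : IntegrableOn f s μ) (hf_nonneg : ∀ x ∈ s, 0 ≤ f x) :
    μ.withDensity (fun x => ENNReal.ofReal (f x)) s = ENNReal.ofReal (∫ x in s, f x ∂μ) := by
  rw [withDensity_apply _ hs, ofReal_integral_eq_lintegral_ofReal hf
    ((ae_restrict_iff' hs).mpr (ae_of_all _ hf_nonneg))]

lemma setIntegral_withDensity_ofReal {g : α → ℝ} (hg : Measurable g) (hg_nonneg : ∀ x, 0 ≤ g x)
    {s : Set α} (hs : MeasurableSet s) (f : α → ℝ) :
    ∫ x in s, f x ∂μ.withDensity (fun x => ENNReal.ofReal (g x)) = ∫ x in s, g x * f x ∂μ := by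
  rw [setIntegral_withDensity_eq_setIntegral_toReal_smul hg.ennreal_ofReal
    (ae_of_all _ fun _ => ENNReal.ofReal_lt_top) _ hs]
  simp only [ENNReal.toReal_ofReal (hg_nonneg _), smul_eq_mul]

lemma integral_cond_eq_inv_mul_setIntegral (μ : Measure α) (s : Set α) (f : α → ℝ) :
    ∫ x, f x ∂μ[|s] = (μ.real s)⁻¹ * ∫ x in s, f x ∂μ := by
  rw [ProbabilityTheory.cond, integral_smul_measure, ENNReal.toReal_inv, smul_eq_mul,
    measureReal_def]

lemma cond_map {Ω : Type*} [MeasurableSpace Ω] (μ : Measure Ω) {X : Ω → α} (hX : Measurable X)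
    {s : Set α} (hs : MeasurableSet s) : (μ.map X)[|s] = (μ[|X ⁻¹' s]).map X := by
  rw [ProbabilityTheory.cond, ProbabilityTheory.cond, Measure.map_smul,
    Measure.restrict_map hX hs, Measure.map_apply hX hs]

end Measures

section ExpIntegrals

variable {a : ℝ}

lemma exp_neg_mul_sub (a c t : ℝ) : exp (-a * (t - c)) = exp (a * c) * exp (-a * t) := by
  rw [← exp_add]; ring_nf

lemma integrableOn_exp_neg_mul_sub_Ioi (ha : 0 < a) (b c : ℝ) :
    IntegrableOn (fun t => exp (-a * (t - c))) (Ioi b) := by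
  simp_rw [exp_neg_mul_sub a c]
  exact (exp_neg_integrableOn_Ioi b ha).const_mul _

lemma integral_exp_neg_mul_sub_Ioi (ha : 0 < a) (b c : ℝ) :
    ∫ t in Ioi b, exp (-a * (t - c)) = exp (-a * (b - c)) / a := by
  simp_rw [exp_neg_mul_sub a c]
  rw [integral_const_mul, integral_exp_mul_Ioi (neg_lt_zero.mpr ha)]
  field_simp

lemma integral_mul_exp_neg_mul_sub (ha : a ≠ 0) (b c : ℝ) :
    ∫ t in c..b, t * exp (-a * (t - c))
      = (c / a + 1 / a ^ 2) - (b / a + 1 / a ^ 2) * exp (-a * (b - c)) := by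
  have hderiv (t : ℝ) : HasDerivAt (fun u => -(u / a + 1 / a ^ 2) * exp (-a * (u - c)))
      (t * exp (-a * (t - c))) t := by
    refine ((((hasDerivAt_id' t).div_const a).add_const (1 / a ^ 2)).fun_neg.fun_mul
      (((hasDerivAt_id' t).sub_const c).const_mul (-a)).exp).congr_deriv ?_
    field_simp
    ring
  rw [intervalIntegral.integral_eq_sub_of_hasDerivAt (fun t _ => hderiv t)
    ((by fun_prop : Continuous fun t => t * exp (-a * (t - c))).intervalIntegrable _ _)]
  simp only [sub_self, mul_zero, exp_zero]
  ring

end ExpIntegrals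

section ShiftedExp

variable {l c x : ℝ}

lemma shiftedExp_Ioi (hl : 0 < l) (hx : c ≤ x) :
    shiftedExp l c (Ioi x) = ENNReal.ofReal (exp (-l * (x - c))) := by
  have hdens : EqOn (fun t => l * exp (-l * (t - c)))
      (fun t => if c < t then l * exp (-l * (t - c)) else 0) (Ioi x) :=
    fun t ht => (if_pos (hx.trans_lt ht)).symm
  have hint : IntegrableOn (fun t => if c < t then l * exp (-l * (t - c)) else 0) (Ioi x) :=
    IntegrableOn.congr_fun ((integrableOn_exp_neg_mul_sub_Ioi hl x c).const_mul l) hdens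
      measurableSet_Ioi
  rw [shiftedExp, withDensity_ofReal_apply_eq_integral measurableSet_Ioi hint
      (fun t _ => by split_ifs <;> positivity),
    ← setIntegral_congr_fun measurableSet_Ioi hdens, integral_const_mul,
    integral_exp_neg_mul_sub_Ioi hl, mul_div_cancel₀ _ hl.ne']

lemma shiftedExp_Iic_self : shiftedExp l c (Iic c) = 0 := by
  rw [shiftedExp, withDensity_apply _ measurableSet_Iic,
    setLIntegral_congr_fun measurableSet_Iic (g := 0) fun t (ht : t ≤ c) => by simp [ht.not_gt]]
  simp

lemma isProbabilityMeasure_shiftedExp (hl : 0 < l) : IsProbabilityMeasure (shiftedExp l c) := by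
  constructor
  rw [← Iic_union_Ioi (a := c), measure_union (Iic_disjoint_Ioi le_rfl) measurableSet_Ioi,
    shiftedExp_Iic_self, shiftedExp_Ioi hl le_rfl]
  simp

lemma shiftedExp_Iic (hl : 0 < l) (hx : c ≤ x) :
    shiftedExp l c (Iic x) = ENNReal.ofReal (1 - exp (-l * (x - c))) := by
  have := isProbabilityMeasure_shiftedExp (c := c) hl
  rw [← compl_Ioi, prob_compl_eq_one_sub measurableSet_Ioi, shiftedExp_Ioi hl hx,
    ENNReal.ofReal_sub _ (exp_pos _).le, ENNReal.ofReal_one]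

lemma shiftedExp_Iic_of_le (hx : x ≤ c) : shiftedExp l c (Iic x) = 0 :=
  measure_mono_null (Iic_subset_Iic.mpr hx) shiftedExp_Iic_self

end ShiftedExp

section Counting

variable {ι α : Type*} [Fintype ι] [DecidableEq ι] {A : Set α} [DecidablePred (· ∈ A)]

lemma setOf_filter_mem_eq (S : Finset ι) :
    {v : ι → α | ({i | v i ∈ A} : Finset ι) = S} = univ.pi fun i => if i ∈ S then A else Aᶜ := by
  ext v
  simp only [mem_ofPred_eq, mem_pi, mem_univ, true_implies, Finset.ext_iff, Finset.mem_filter,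
    Finset.mem_univ, true_and]
  refine forall_congr' fun i => ?_
  split_ifs with hi <;> simp [hi]

variable [MeasurableSpace α]

lemma measurableSet_preimage_filter_mem (hA : MeasurableSet A) (T : Set (Finset ι)) :
    MeasurableSet ((fun v : ι → α => ({i | v i ∈ A} : Finset ι)) ⁻¹' T) := by
  rw [← biUnion_preimage_singleton]
  refine .biUnion T.to_countable fun S _ => ?_
  change MeasurableSet {v : ι → α | ({i | v i ∈ A} : Finset ι) = S}
  rw [setOf_filter_mem_eq]
  exact .univ_pi fun i => by split_ifs; exacts [hA, hA.compl]

variable (μ : Measure α) [SigmaFinite μ]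

lemma measure_pi_filter_mem_eq (S : Finset ι) :
    Measure.pi (fun _ : ι => μ) {v | ({i | v i ∈ A} : Finset ι) = S}
      = μ A ^ #S * μ Aᶜ ^ (Fintype.card ι - #S) := by
  rw [setOf_filter_mem_eq, Measure.pi_pi]
  simp only [apply_ite μ]
  rw [Finset.prod_ite, Finset.prod_const, Finset.prod_const]
  simp [Finset.filter_not, Finset.card_univ_sdiff]

lemma measure_pi_card_filter_mem_eq (hA : MeasurableSet A) (m : ℕ) :
    Measure.pi (fun _ : ι => μ) {v | #{i | v i ∈ A} = m}
      = (Fintype.card ι).choose m * μ A ^ m * μ Aᶜ ^ (Fintype.card ι - m) := by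
  have hfib : {v : ι → α | #{i | v i ∈ A} = m}
      = (fun v : ι → α => ({i | v i ∈ A} : Finset ι)) ⁻¹'
          (Finset.univ.powersetCard m : Finset (Finset ι)) := by
    ext v; simp
  rw [hfib, ← sum_measure_preimage_singleton _ fun S _ => measurableSet_preimage_filter_mem hA _]
  calc _ = ∑ _S ∈ Finset.univ.powersetCard m, μ A ^ m * μ Aᶜ ^ (Fintype.card ι - m) :=
        Finset.sum_congr rfl fun S hS => (measure_pi_filter_mem_eq μ S).trans
          (by rw [(Finset.mem_powersetCard.mp hS).2])
    _ = _ := by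
      rw [Finset.sum_const, Finset.card_powersetCard, Finset.card_univ, nsmul_eq_mul, mul_assoc]

lemma measure_pi_le_card_filter_mem (hA : MeasurableSet A) (K : ℕ) :
    Measure.pi (fun _ : ι => μ) {v | K ≤ #{i | v i ∈ A}}
      = ∑ m ∈ Finset.Icc K (Fintype.card ι),
          (Fintype.card ι).choose m * μ A ^ m * μ Aᶜ ^ (Fintype.card ι - m) := by
  have hfib : {v : ι → α | K ≤ #{i | v i ∈ A}}
      = (fun v : ι → α => #{i | v i ∈ A}) ⁻¹' ↑(Finset.Icc K (Fintype.card ι)) := by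
    ext v; simp [Finset.card_le_univ]
  rw [hfib, ← sum_measure_preimage_singleton _ fun m _ =>
    measurableSet_preimage_filter_mem hA {S | #S = m}]
  exact Finset.sum_congr rfl fun m _ => measure_pi_card_filter_mem_eq μ hA m

end Counting

section OrderStat

variable {Ω : Type*} {N K : ℕ}

lemma orderStat_le_iff (T : Fin N → Ω → ℝ) (ω : Ω) (hK : 1 ≤ K) (hKN : K ≤ N) (x : ℝ) :
    orderStat T K ω ≤ x ↔ K ≤ #{i | T i ω ≤ x} := by
  set S := {x : ℝ | K ≤ #{i | T i ω ≤ x}}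
  have hS : orderStat T K ω = sInf S := by
    simp only [orderStat, Nat.card_eq_fintype_card, Fintype.card_subtype, S]
  have hmono {x y : ℝ} (hxy : x ≤ y) (hx : x ∈ S) : y ∈ S :=
    hx.trans (Finset.card_le_card (Finset.monotone_filter_right _ fun _ _ h => h.trans hxy))
  have hclosed : IsClosed S := by
    have : S = ⋃ s ∈ {s : Finset (Fin N) | #s = K}, ⋂ i ∈ s, Ici (T i ω) := by
      ext x
      simp [S, Finset.le_card_iff_exists_subset_card, Finset.subset_iff, and_comm]
    rw [this]
    exact (toFinite _).isClosed_biUnion fun s _ => isClosed_biInter fun i _ => isClosed_Ici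
  obtain ⟨M, hM⟩ := (finite_range fun i => T i ω).bddAbove
  obtain ⟨m, hm⟩ := (finite_range fun i => T i ω).bddBelow
  have hM : M ∈ S := by
    simpa [S, Finset.filter_true_of_mem fun i _ => hM (mem_range_self i)] using hKN
  have hbdd : BddBelow S := by
    refine ⟨m, fun x hx => ?_⟩
    obtain ⟨i, hi⟩ := Finset.card_pos.mp (hK.trans hx)
    exact (hm (mem_range_self i)).trans (Finset.mem_filter.mp hi).2
  rw [hS]
  exact ⟨fun h => hmono h (hclosed.csInf_mem ⟨M, hM⟩ hbdd), fun h => csInf_le hbdd h⟩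

lemma measurable_orderStat [MeasurableSpace Ω] {T : Fin N → Ω → ℝ} (hT : ∀ i, Measurable (T i))
    (hK : 1 ≤ K) (hKN : K ≤ N) : Measurable (orderStat T K) := by
  refine measurable_of_Iic fun x => ?_
  have : orderStat T K ⁻¹' Iic x = (fun ω i => T i ω) ⁻¹'
      ((fun v : Fin N → ℝ => ({i | v i ∈ Iic x} : Finset (Fin N))) ⁻¹' {S | K ≤ #S}) := by
    ext ω
    simp [orderStat_le_iff T ω hK hKN]
  rw [this]
  exact measurable_pi_lambda _ hT (measurableSet_preimage_filter_mem measurableSet_Iic _)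

lemma measure_pi_orderStat_le (μ : Measure ℝ) [SigmaFinite μ] (hK : 1 ≤ K) (hKN : K ≤ N)
    (x : ℝ) :
    Measure.pi (fun _ : Fin N => μ) {v | orderStat (fun i v => v i) K v ≤ x}
      = ∑ m ∈ Finset.Icc K N, N.choose m * μ (Iic x) ^ m * μ (Ioi x) ^ (N - m) := by
  have := measure_pi_le_card_filter_mem (ι := Fin N) μ (measurableSet_Iic (a := x)) K
  simp only [compl_Iic, Fintype.card_fin, mem_Iic] at this
  simpa only [orderStat_le_iff _ _ hK hKN] using this

end OrderStat

section BinomialTail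

variable {N K : ℕ}

noncomputable def binomialTail (N K : ℕ) (p : ℝ) : ℝ :=
  ∑ m ∈ Finset.Icc K N, N.choose m * p ^ m * (1 - p) ^ (N - m)

lemma hasDerivAt_choose_mul_pow_mul_pow (N m : ℕ) (p : ℝ) :
    HasDerivAt (fun q : ℝ => N.choose m * q ^ m * (1 - q) ^ (N - m))
      (m * N.choose m * p ^ (m - 1) * (1 - p) ^ (N - m)
        - (m + 1 : ℕ) * N.choose (m + 1) * p ^ m * (1 - p) ^ (N - (m + 1))) p := by
  refine (((hasDerivAt_pow m p).const_mul _).fun_mul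
    (((hasDerivAt_const p 1).fun_sub (hasDerivAt_id' p)).fun_pow (N - m))).congr_deriv ?_
  have hchoose : ((N - m : ℕ) : ℝ) * N.choose m = ((m + 1 : ℕ) : ℝ) * N.choose (m + 1) := by
    rw [mul_comm, mul_comm ((m + 1 : ℕ) : ℝ)]
    exact_mod_cast (Nat.choose_succ_right_eq N m).symm
  rw [Nat.sub_add_eq, ← hchoose]
  ring

lemma hasDerivAt_binomialTail (hKN : K ≤ N) (p : ℝ) :
    HasDerivAt (binomialTail N K) (K * N.choose K * p ^ (K - 1) * (1 - p) ^ (N - K)) p := by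
  set A : ℕ → ℝ := fun m => m * N.choose m * p ^ (m - 1) * (1 - p) ^ (N - m)
  have htelescope : ∑ m ∈ Finset.Icc K N, (A m - A (m + 1)) = A K := by
    have hsum := Finset.sum_Icc_sub hKN A
    have hlast : A (N + 1) = 0 := by simp [A]
    rw [Finset.sum_sub_distrib] at hsum ⊢
    linarith
  exact (HasDerivAt.fun_sum fun m _ => hasDerivAt_choose_mul_pow_mul_pow N m p).congr_deriv
    htelescope

lemma binomialTail_zero (hK : 1 ≤ K) : binomialTail N K 0 = 0 :=
  Finset.sum_eq_zero fun m hm => by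
    rw [zero_pow (by have := (Finset.mem_Icc.mp hm).1; omega), mul_zero, zero_mul]

lemma ofReal_binomialTail {p : ℝ} (hp₀ : 0 ≤ p) (hp₁ : p ≤ 1) :
    ENNReal.ofReal (binomialTail N K p)
      = ∑ m ∈ Finset.Icc K N,
          N.choose m * ENNReal.ofReal p ^ m * ENNReal.ofReal (1 - p) ^ (N - m) := by
  have h1p : 0 ≤ 1 - p := sub_nonneg.mpr hp₁
  rw [binomialTail, ENNReal.ofReal_sum_of_nonneg fun m _ => by positivity]
  refine Finset.sum_congr rfl fun m _ => ?_
  rw [ENNReal.ofReal_mul (by positivity), ENNReal.ofReal_mul (by positivity),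
    ENNReal.ofReal_natCast, ENNReal.ofReal_pow hp₀, ENNReal.ofReal_pow h1p]

end BinomialTail

section OrderStatDensity

variable {N K : ℕ} {l c : ℝ}

noncomputable def shiftedExpOrderStatPDF (N K : ℕ) (l c : ℝ) : ℝ → ℝ :=
  (Ioi c).indicator fun t =>
    K * N.choose K * (1 - exp (-l * (t - c))) ^ (K - 1) * exp (-l * (t - c)) ^ (N - K)
      * (l * exp (-l * (t - c)))

-- `B_{K,j}` and `U_{K,j}` of the paper.
noncomputable def orderStatCoeff (N K j : ℕ) : ℝ := K * N.choose K * (K - 1).choose j * (-1) ^ j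

noncomputable def orderStatRate (N K j : ℕ) : ℝ := N - K + 1 + j

lemma orderStatRate_pos (hKN : K ≤ N) (j : ℕ) : 0 < orderStatRate N K j := by
  have : (K : ℝ) ≤ N := by exact_mod_cast hKN
  rw [orderStatRate]
  positivity

lemma shiftedExpOrderStatPDF_nonneg (hl : 0 ≤ l) (t : ℝ) :
    0 ≤ shiftedExpOrderStatPDF N K l c t := by
  refine indicator_nonneg (fun t (ht : c < t) => ?_) t
  have : exp (-l * (t - c)) ≤ 1 := exp_le_one_iff.mpr (by nlinarith)
  have : 0 ≤ 1 - exp (-l * (t - c)) := by linarith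
  positivity

lemma measurable_shiftedExpOrderStatPDF : Measurable (shiftedExpOrderStatPDF N K l c) :=
  (by fun_prop : Measurable fun t => _).indicator measurableSet_Ioi

lemma hasDerivAt_binomialTail_one_sub_exp (hKN : K ≤ N) (t : ℝ) :
    HasDerivAt (fun t => binomialTail N K (1 - exp (-l * (t - c))))
      (K * N.choose K * (1 - exp (-l * (t - c))) ^ (K - 1) * exp (-l * (t - c)) ^ (N - K)
        * (l * exp (-l * (t - c)))) t := by
  have hF : HasDerivAt (fun t => 1 - exp (-l * (t - c))) (l * exp (-l * (t - c))) t :=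
    ((hasDerivAt_const t 1).fun_sub
      (((hasDerivAt_id' t).sub_const c).const_mul (-l)).exp).congr_deriv (by ring)
  exact ((hasDerivAt_binomialTail hKN _).comp t hF).congr_deriv (by rw [sub_sub_cancel])

lemma integral_shiftedExpOrderStatPDF_Iic (hK : 1 ≤ K) (hKN : K ≤ N) {x : ℝ} (hx : c ≤ x) :
    ∫ t in Iic x, shiftedExpOrderStatPDF N K l c t
      = binomialTail N K (1 - exp (-l * (x - c))) := by
  rw [shiftedExpOrderStatPDF, setIntegral_indicator measurableSet_Ioi, Iic_inter_Ioi,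
    ← intervalIntegral.integral_of_le hx,
    intervalIntegral.integral_eq_sub_of_hasDerivAt
      (fun t _ => hasDerivAt_binomialTail_one_sub_exp hKN t)
      ((by fun_prop : Continuous fun t => _).intervalIntegrable _ _)]
  simp [binomialTail_zero hK]

lemma shiftedExpOrderStatPDF_eq_indicator_sum (hK : 1 ≤ K) (hKN : K ≤ N) :
    shiftedExpOrderStatPDF N K l c = (Ioi c).indicator fun t =>
      ∑ j ∈ Finset.range K,
        orderStatCoeff N K j * (l * exp (-l * orderStatRate N K j * (t - c))) := by
  refine congrArg _ (funext fun t => ?_)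
  set q := exp (-l * (t - c))
  have hpow (j : ℕ) : exp (-l * orderStatRate N K j * (t - c)) = q ^ (N - K) * q * q ^ j := by
    rw [← pow_succ, ← pow_add, ← exp_nat_mul]
    congr 1
    push_cast [orderStatRate, Nat.cast_sub hKN]
    ring
  have hbinom : (1 - q) ^ (K - 1)
      = ∑ j ∈ Finset.range K, ((K - 1).choose j : ℝ) * (-1) ^ j * q ^ j := by
    rw [sub_eq_neg_add, add_pow, Nat.sub_add_cancel hK]
    exact Finset.sum_congr rfl fun j _ => by ring
  simp only [hpow, hbinom, orderStatCoeff, Finset.mul_sum, Finset.sum_mul]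
  exact Finset.sum_congr rfl fun j _ => by ring

lemma integrableOn_orderStatCoeff_mul_exp_Ioi (hl : 0 < l) (hKN : K ≤ N) (j : ℕ) (b : ℝ) :
    IntegrableOn (fun t => orderStatCoeff N K j * (l * exp (-l * orderStatRate N K j * (t - c))))
      (Ioi b) := by
  have := integrableOn_exp_neg_mul_sub_Ioi (mul_pos hl (orderStatRate_pos hKN j)) b c
  simp only [← neg_mul] at this
  exact (this.const_mul l).const_mul _

lemma integrable_shiftedExpOrderStatPDF (hl : 0 < l) (hK : 1 ≤ K) (hKN : K ≤ N) :
    Integrable (shiftedExpOrderStatPDF N K l c) := by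
  rw [shiftedExpOrderStatPDF_eq_indicator_sum hK hKN, integrable_indicator_iff measurableSet_Ioi]
  exact integrable_finsetSum _ fun j _ => integrableOn_orderStatCoeff_mul_exp_Ioi hl hKN j c

lemma integral_shiftedExpOrderStatPDF_Ioi (hl : 0 < l) (hK : 1 ≤ K) (hKN : K ≤ N) {b : ℝ}
    (hb : c ≤ b) :
    ∫ t in Ioi b, shiftedExpOrderStatPDF N K l c t
      = ∑ j ∈ Finset.range K, orderStatCoeff N K j
          * exp (-l * orderStatRate N K j * (b - c)) / orderStatRate N K j := by
  rw [shiftedExpOrderStatPDF_eq_indicator_sum hK hKN, setIntegral_indicator measurableSet_Ioi,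
    inter_eq_left.mpr (Ioi_subset_Ioi hb),
    integral_finsetSum _ fun j _ => integrableOn_orderStatCoeff_mul_exp_Ioi hl hKN j b]
  refine Finset.sum_congr rfl fun j _ => ?_
  have hr := orderStatRate_pos hKN j
  have := integral_exp_neg_mul_sub_Ioi (mul_pos hl hr) b c
  simp only [neg_mul] at this ⊢
  rw [integral_const_mul, integral_const_mul, this]
  field_simp

lemma integral_shiftedExpOrderStatPDF_mul_Iio (hl : 0 < l) (hK : 1 ≤ K) (hKN : K ≤ N) {b : ℝ}
    (hb : c ≤ b) :
    ∫ t in Iio b, shiftedExpOrderStatPDF N K l c t * t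
      = ∑ j ∈ Finset.range K, orderStatCoeff N K j / (l * orderStatRate N K j ^ 2)
          * (1 + c * l * orderStatRate N K j
            - (1 + b * l * orderStatRate N K j) * exp (-l * orderStatRate N K j * (b - c))) := by
  rw [shiftedExpOrderStatPDF_eq_indicator_sum hK hKN]
  simp only [← indicator_mul_left _ _ fun t : ℝ => t]
  rw [setIntegral_indicator measurableSet_Ioi, Iio_inter_Ioi, ← integral_Ioc_eq_integral_Ioo,
    ← intervalIntegral.integral_of_le hb]
  simp only [Finset.sum_mul]
  rw [intervalIntegral.integral_finsetSum fun j _ =>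
    (by fun_prop : Continuous _).intervalIntegrable _ _]
  refine Finset.sum_congr rfl fun j _ => ?_
  have hr := orderStatRate_pos hKN j
  set r := orderStatRate N K j
  have key := integral_mul_exp_neg_mul_sub (mul_pos hl hr).ne' b c
  simp only [← neg_mul] at key
  calc ∫ t in c..b, orderStatCoeff N K j * (l * exp (-l * r * (t - c))) * t
      = orderStatCoeff N K j * l * ∫ t in c..b, t * exp (-l * r * (t - c)) := by
        rw [← intervalIntegral.integral_const_mul]
        exact intervalIntegral.integral_congr fun t _ => by ring
    _ = _ := by
        rw [key]
        field_simp
        ring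

lemma map_orderStat_pi_shiftedExp (hl : 0 < l) (hK : 1 ≤ K) (hKN : K ≤ N) :
    (Measure.pi fun _ : Fin N => shiftedExp l c).map (orderStat (fun i v => v i) K)
      = volume.withDensity fun t => ENNReal.ofReal (shiftedExpOrderStatPDF N K l c t) := by
  have := isProbabilityMeasure_shiftedExp (c := c) hl
  have hmeas := measurable_orderStat (fun i => measurable_pi_apply i) hK hKN
  have := Measure.isProbabilityMeasure_map (μ := Measure.pi fun _ : Fin N => shiftedExp l c)
    hmeas.aemeasurable
  have hint := integrable_shiftedExpOrderStatPDF (c := c) hl hK hKN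
  have := isFiniteMeasure_withDensity_ofReal hint.hasFiniteIntegral
  refine Measure.ext_of_Iic _ _ fun x => ?_
  rw [Measure.map_apply hmeas measurableSet_Iic, withDensity_ofReal_apply_eq_integral
    measurableSet_Iic hint.integrableOn fun t _ => shiftedExpOrderStatPDF_nonneg hl.le t]
  change Measure.pi _ {v | orderStat _ K v ≤ x} = _
  rw [measure_pi_orderStat_le _ hK hKN]
  rcases le_or_gt c x with hx | hx
  · have hexp : exp (-l * (x - c)) ≤ 1 := exp_le_one_iff.mpr (by nlinarith)
    rw [shiftedExp_Iic hl hx, shiftedExp_Ioi hl hx, integral_shiftedExpOrderStatPDF_Iic hK hKN hx,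
      ofReal_binomialTail (by linarith) (by linarith [exp_pos (-l * (x - c))]), sub_sub_cancel]
  · have hzero : ∫ t in Iic x, shiftedExpOrderStatPDF N K l c t = 0 :=
      setIntegral_eq_zero_of_forall_eq_zero fun t (ht : t ≤ x) =>
        indicator_of_notMem (not_lt.mpr (ht.trans hx.le)) _
    rw [shiftedExp_Iic_of_le hx.le, hzero, ENNReal.ofReal_zero]
    exact Finset.sum_eq_zero fun m hm => by
      rw [zero_pow (by have := (Finset.mem_Icc.mp hm).1; omega), mul_zero, zero_mul]

lemma withDensity_shiftedExpOrderStatPDF_real_Ici (hl : 0 < l) (hK : 1 ≤ K) (hKN : K ≤ N)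
    {b : ℝ} (hb : c ≤ b) :
    (volume.withDensity fun t => ENNReal.ofReal (shiftedExpOrderStatPDF N K l c t)).real (Ici b)
      = ∑ j ∈ Finset.range K, orderStatCoeff N K j
          * exp (-l * orderStatRate N K j * (b - c)) / orderStatRate N K j := by
  rw [measureReal_def, withDensity_ofReal_apply_eq_integral measurableSet_Ici
      (integrable_shiftedExpOrderStatPDF hl hK hKN).integrableOn
      fun t _ => shiftedExpOrderStatPDF_nonneg hl.le t,
    ENNReal.toReal_ofReal (setIntegral_nonneg measurableSet_Ici fun t _ =>
      shiftedExpOrderStatPDF_nonneg hl.le t),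
    integral_Ici_eq_integral_Ioi, integral_shiftedExpOrderStatPDF_Ioi hl hK hKN hb]

end OrderStatDensity

theorem cond_first_moment_orderStat_fixed_deadline_general
    {Ω : Type*} [MeasurableSpace Ω] (P : MeasureTheory.Measure Ω) [IsProbabilityMeasure P]
    (N K : ℕ) (hK : 1 ≤ K) (hKN : K ≤ N)
    (l c TD : ℝ) (hl : 0 < l) (hTD : c < TD)
    (T : Fin N → Ω → ℝ) (hT : ∀ i, Measurable (T i))
    (hlaw : MeasureTheory.Measure.map (fun ω i => T i ω) P
      = MeasureTheory.Measure.pi (fun _ : Fin N => shiftedExp l c))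
    (B : ℕ → ℝ) (hB : ∀ j, B j = (K : ℝ) * (N.choose K : ℝ) * ((K - 1).choose j : ℝ) * (-1) ^ j)
    (U : ℕ → ℝ) (hU : ∀ j, U j = (N : ℝ) - K + 1 + j)
    (Z : ℝ) (hZ : Z = ∑ i ∈ Finset.range K, B i * Real.exp (-l * U i * (TD - c)) / U i) :
    (∫ ω, orderStat T K ω ∂(P[|{ω | orderStat T K ω < TD}]))
      = (1 / (1 - Z)) * ∑ j ∈ Finset.range K,
          (B j / (l * (U j) ^ 2))
            * (1 + c * l * U j - (1 + TD * l * U j) * Real.exp (-l * U j * (TD - c))) := by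
  obtain rfl : B = orderStatCoeff N K := funext hB
  obtain rfl : U = orderStatRate N K := funext hU
  set ν := volume.withDensity fun t => ENNReal.ofReal (shiftedExpOrderStatPDF N K l c t)
  have hX : Measurable (orderStat T K) := measurable_orderStat hT hK hKN
  have hlawX : P.map (orderStat T K) = ν := by
    have := map_orderStat_pi_shiftedExp (c := c) hl hK hKN
    rwa [← hlaw, Measure.map_map (measurable_orderStat (fun i => measurable_pi_apply i) hK hKN)
      (measurable_pi_lambda _ hT)] at this
  have : IsProbabilityMeasure ν := hlawX ▸ Measure.isProbabilityMeasure_map hX.aemeasurable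
  have hmass : ν.real (Iio TD) = 1 - Z := by
    rw [← compl_Ici, probReal_compl_eq_one_sub measurableSet_Ici,
      withDensity_shiftedExpOrderStatPDF_real_Ici hl hK hKN hTD.le, hZ]
  calc ∫ ω, orderStat T K ω ∂P[|orderStat T K ⁻¹' Iio TD]
      = ∫ x, x ∂ν[|Iio TD] := by
        rw [← hlawX, cond_map P hX measurableSet_Iio]
        exact (integral_map hX.aemeasurable aestronglyMeasurable_id).symm
    _ = _ := by
        rw [integral_cond_eq_inv_mul_setIntegral, hmass, setIntegral_withDensity_ofReal
            measurable_shiftedExpOrderStatPDF (shiftedExpOrderStatPDF_nonneg hl.le)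
            measurableSet_Iio,
          integral_shiftedExpOrderStatPDF_mul_Iio hl hK hKN hTD.le, one_div]

theorem cond_first_moment_orderStat_fixed_deadline
    {Ω : Type*} [MeasurableSpace Ω] (P : MeasureTheory.Measure Ω) [IsProbabilityMeasure P]
    (N K : ℕ) (hK : 1 ≤ K) (hKN : K ≤ N)
    (l c TD : ℝ) (hl : 0 < l) (hc : 0 ≤ c) (hTD : c < TD)
    (T : Fin N → Ω → ℝ) (hT : ∀ i, Measurable (T i))
    (hlaw : MeasureTheory.Measure.map (fun ω i => T i ω) P
      = MeasureTheory.Measure.pi (fun _ : Fin N => shiftedExp l c))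
    (B : ℕ → ℝ) (hB : ∀ j, B j = (K : ℝ) * (N.choose K : ℝ) * ((K - 1).choose j : ℝ) * (-1) ^ j)
    (U : ℕ → ℝ) (hU : ∀ j, U j = (N : ℝ) - K + 1 + j)
    (Z : ℝ) (hZ : Z = ∑ i ∈ Finset.range K, B i * Real.exp (-l * U i * (TD - c)) / U i) :
    (∫ ω, orderStat T K ω ∂(P[|{ω | orderStat T K ω < TD}]))
      = (1 / (1 - Z)) * ∑ j ∈ Finset.range K,
          (B j / (l * (U j) ^ 2))
            * (1 + c * l * U j - (1 + TD * l * U j) * Real.exp (-l * U j * (TD - c))) :=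
  cond_first_moment_orderStat_fixed_deadline_general P N K hK hKN l c TD hl hTD T hT hlaw B hB U hU
    Z hZ
end

section
/- Let T₁,...,T_N be i.i.d. continuous random variables (e.g., shifted exponential with rate λ_s, shift c), T_n one of them, T_N(K) the K-th order statistic, and T_D > c a constant. Then P(T_D < min{T_N(K), T_n}) = ((N-K)/N)·Z_K + (1/N)·Σ_{h=1}^K Z_h, where Z_h = P(T_D < T_N(h)). -/
/-!
Both sides depend on the sample only through the random set `S = {i | T i ≤ TD}`: for
`1 ≤ h ≤ N`, `TD < T_N(h)` iff `#S < h`, and `TD < T_n` iff `n ∉ S`. Under the product law,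
`S = s` has probability `a (#s)` with `a j = μ(-∞, TD] ^ j * μ(TD, ∞) ^ (N - j)`, so the left-hand
side is `∑_{j<K} C(N-1, j) a j` while `Z_h = ∑_{j<h} C(N, j) a j`. The identity then holds
termwise by `N * C(N-1, j) = (N - j) * C(N, j)`, the discrete form of exchangeability: given
`#S = j`, the index `n` lies outside `S` with probability `(N - j) / N`.
-/

open MeasureTheory ProbabilityTheory Real

open Finset

section OrderStatistic

variable {ι : Type*} [Fintype ι]

lemma isClosed_setOf_le_card_filter_le (x : ι → ℝ) (K : ℕ) :
    IsClosed {t : ℝ | K ≤ #{i | x i ≤ t}} := by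
  have : {t : ℝ | K ≤ #{i | x i ≤ t}} = ⋃ s ∈ powersetCard K univ, ⋂ i ∈ s, Set.Ici (x i) := by
    ext t
    simp only [Set.mem_ofPred_eq, Set.mem_iUnion, Set.mem_iInter, mem_powersetCard, Set.mem_Ici,
      le_card_iff_exists_subset_card, exists_prop]
    constructor
    · rintro ⟨s, hs, rfl⟩
      exact ⟨s, ⟨subset_univ _, rfl⟩, fun i hi => (mem_filter.1 (hs hi)).2⟩
    · rintro ⟨s, ⟨-, rfl⟩, hs⟩
      exact ⟨s, fun i hi => mem_filter.2 ⟨mem_univ _, hs i hi⟩, rfl⟩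
  rw [this]
  exact isClosed_biUnion_finset fun s _ => isClosed_biInter fun i _ => isClosed_Ici

lemma lt_sInf_setOf_le_card_filter_le_iff {x : ι → ℝ} {K : ℕ} (hK : 1 ≤ K)
    (hKN : K ≤ Fintype.card ι) (t : ℝ) :
    t < sInf {u : ℝ | K ≤ #{i | x i ≤ u}} ↔ #{i | x i ≤ t} < K := by
  set S := {u : ℝ | K ≤ #{i | x i ≤ u}}
  have hmono : Monotone fun u : ℝ => #{i | x i ≤ u} := fun u v huv =>
    card_le_card (monotone_filter_right _ fun _ _ hi => hi.trans huv)
  obtain ⟨M, hM⟩ := (Set.finite_range x).bddAbove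
  obtain ⟨m, hm⟩ := (Set.finite_range x).bddBelow
  have hne : S.Nonempty :=
    ⟨M, by simpa [S, filter_true_of_mem fun i _ => hM ⟨i, rfl⟩] using hKN⟩
  have hbdd : BddBelow S := by
    refine ⟨m, fun u hu => ?_⟩
    have hu : K ≤ #{i | x i ≤ u} := hu
    obtain ⟨i, hi⟩ : ({i | x i ≤ u} : Finset ι).Nonempty := card_pos.1 (by omega)
    exact (hm ⟨i, rfl⟩).trans (by simpa using hi)
  constructor
  · intro h
    by_contra! hle
    exact (csInf_le hbdd hle).not_gt h
  · intro h
    by_contra! hle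
    exact (((isClosed_setOf_le_card_filter_le x K).csInf_mem hne hbdd).trans (hmono hle)).not_gt h

end OrderStatistic

theorem lt_orderStat_iff {Ω : Type*} {N K : ℕ} (hK : 1 ≤ K) (hKN : K ≤ N) (T : Fin N → Ω → ℝ)
    (ω : Ω) (t : ℝ) : t < orderStat T K ω ↔ #{i | T i ω ≤ t} < K := by
  simp only [orderStat, Nat.card_eq_fintype_card, Fintype.card_subtype]
  exact lt_sInf_setOf_le_card_filter_le_iff hK (by simpa using hKN) t

section Product

variable {ι α : Type*} [Fintype ι] [DecidableEq ι] {p : α → Prop} [DecidablePred p]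

lemma setOf_filter_eq_eq_pi (s : Finset ι) :
    {x : ι → α | ({i | p (x i)} : Finset ι) = s}
      = Set.univ.pi fun i => if i ∈ s then {a | p a} else {a | ¬p a} := by
  ext x
  simp only [Set.mem_ofPred_eq, Set.mem_pi, Set.mem_univ, true_implies, Finset.ext_iff,
    mem_filter, mem_univ, true_and]
  refine forall_congr' fun i => ?_
  split_ifs with hi <;> simp [hi]

variable [MeasurableSpace α]

lemma measurableSet_setOf_filter_eq (hp : MeasurableSet {a | p a}) (s : Finset ι) :
    MeasurableSet {x : ι → α | ({i | p (x i)} : Finset ι) = s} := by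
  rw [setOf_filter_eq_eq_pi]
  exact .univ_pi fun i => by split_ifs; exacts [hp, hp.compl]

lemma measure_pi_setOf_filter_eq (μ : Measure α) [SigmaFinite μ] (s : Finset ι) :
    Measure.pi (fun _ : ι => μ) {x | ({i | p (x i)} : Finset ι) = s}
      = μ {a | p a} ^ #s * μ {a | ¬p a} ^ (Fintype.card ι - #s) := by
  rw [setOf_filter_eq_eq_pi, Measure.pi_pi, prod_apply_ite, prod_const, prod_const,
    filter_mem_eq_inter, univ_inter, filter_not, filter_mem_eq_inter, univ_inter,
    card_sdiff_of_subset (subset_univ s), card_univ]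

lemma measure_setOf_filter_of_map_eq_pi {Ω : Type*} [MeasurableSpace Ω] {P : Measure Ω}
    {μ : Measure α} [SigmaFinite μ] {X : ι → Ω → α} (hX : ∀ i, Measurable (X i))
    (hlaw : P.map (fun ω i => X i ω) = Measure.pi fun _ => μ) (hp : MeasurableSet {a | p a})
    (Q : Finset ι → Prop) [DecidablePred Q] :
    P {ω | Q {i | p (X i ω)}}
      = ∑ s with Q s, μ {a | p a} ^ #s * μ {a | ¬p a} ^ (Fintype.card ι - #s) := by
  have hXvec : Measurable fun ω i => X i ω := measurable_pi_lambda _ hX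
  let S : Ω → Finset ι := fun ω => {i | p (X i ω)}
  have hfiber (s : Finset ι) :
      S ⁻¹' {s} = (fun ω i => X i ω) ⁻¹' {x | ({i | p (x i)} : Finset ι) = s} := rfl
  have hQ : {ω | Q (S ω)} = S ⁻¹' ↑({s | Q s} : Finset (Finset ι)) := by ext; simp
  rw [hQ, ← sum_measure_preimage_singleton _ fun s _ =>
    hfiber s ▸ hXvec (measurableSet_setOf_filter_eq hp s)]
  refine sum_congr rfl fun s _ => ?_
  rw [hfiber, ← Measure.map_apply hXvec (measurableSet_setOf_filter_eq hp s), hlaw,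
    measure_pi_setOf_filter_eq]

end Product

lemma sum_powerset_filter_card_lt {ι M : Type*} [AddCommMonoid M] (u : Finset ι) (K : ℕ)
    (g : ℕ → M) :
    ∑ s ∈ u.powerset with #s < K, g #s = ∑ j ∈ range K, (#u).choose j • g j := by
  rw [← sum_fiberwise_of_maps_to (g := card) (t := range K)
    fun s hs => mem_range.2 (mem_filter.1 hs).2]
  refine sum_congr rfl fun j hj => ?_
  have : {s ∈ {s ∈ u.powerset | #s < K} | #s = j} = powersetCard j u := by
    ext s
    simp only [mem_filter, mem_powerset, mem_powersetCard]
    constructor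
    · rintro ⟨⟨hs, -⟩, rfl⟩; exact ⟨hs, rfl⟩
    · rintro ⟨hs, rfl⟩; exact ⟨⟨hs, mem_range.1 hj⟩, rfl⟩
  rw [this, sum_congr rfl fun s hs => by rw [(mem_powersetCard.1 hs).2], sum_const,
    card_powersetCard]

section Counting

variable {ι M : Type*} [Fintype ι] [AddCommMonoid M]

lemma sum_filter_card_lt (K : ℕ) (g : ℕ → M) :
    ∑ s : Finset ι with #s < K, g #s = ∑ j ∈ range K, (Fintype.card ι).choose j • g j := by
  rw [← powerset_univ, sum_powerset_filter_card_lt, card_univ]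

lemma sum_filter_card_lt_and_notMem [DecidableEq ι] (n : ι) (K : ℕ) (g : ℕ → M) :
    ∑ s : Finset ι with #s < K ∧ n ∉ s, g #s
      = ∑ j ∈ range K, (Fintype.card ι - 1).choose j • g j := by
  have : ({s | #s < K ∧ n ∉ s} : Finset (Finset ι)) = {s ∈ (univ.erase n).powerset | #s < K} := by
    ext s
    simp only [mem_filter, mem_univ, true_and, mem_powerset, subset_erase, subset_univ]
    tauto
  rw [this, sum_powerset_filter_card_lt, card_erase_of_mem (mem_univ n), card_univ]

end Counting

lemma sum_Icc_sum_range {M : Type*} [AddCommMonoid M] (K : ℕ) (f : ℕ → M) :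
    ∑ h ∈ Icc 1 K, ∑ j ∈ range h, f j = ∑ j ∈ range K, (K - j) • f j := by
  rw [sum_comm' (t' := range K) (s' := fun j => Ioc j K)]
  · simp [sum_const, Nat.card_Ioc]
  · intro h j
    simp only [mem_Icc, mem_range, mem_Ioc]
    omega

lemma sum_range_choose_pred_mul (N K : ℕ) (hKN : K ≤ N) (a : ℕ → ℝ) :
    ∑ j ∈ range K, ((N - 1).choose j : ℝ) * a j
      = (N - K) / N * ∑ j ∈ range K, (N.choose j : ℝ) * a j
        + 1 / N * ∑ h ∈ Icc 1 K, ∑ j ∈ range h, (N.choose j : ℝ) * a j := by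
  rcases N.eq_zero_or_pos with rfl | hN
  · obtain rfl : K = 0 := by omega
    simp
  rw [sum_Icc_sum_range, mul_sum, mul_sum, ← sum_add_distrib]
  refine sum_congr rfl fun j hj => ?_
  have hjK : j < K := mem_range.1 hj
  have hchoose : ((N - 1).choose j : ℝ) * N = N.choose j * (N - j) := by
    have h := Nat.choose_mul_succ_eq (N - 1) j
    rw [Nat.sub_add_cancel hN] at h
    rw [← Nat.cast_sub (by omega : j ≤ N)]
    exact_mod_cast h
  rw [nsmul_eq_mul, Nat.cast_sub hjK.le]
  field_simp
  linear_combination a j * hchoose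

theorem prob_deadline_lt_min_general
    {Ω : Type*} [MeasurableSpace Ω] (P : MeasureTheory.Measure Ω)
    (N K : ℕ) (hK : 1 ≤ K) (hKN : K ≤ N)
    (μ : MeasureTheory.Measure ℝ) [IsProbabilityMeasure μ]
    (T : Fin N → Ω → ℝ) (hT : ∀ i, Measurable (T i)) (n : Fin N) (TD : ℝ)
    (hlaw : MeasureTheory.Measure.map (fun ω i => T i ω) P
      = MeasureTheory.Measure.pi (fun _ : Fin N => μ)) :
    (P {ω | TD < min (orderStat T K ω) (T n ω)}).toReal
      = ((N : ℝ) - K) / N * (P {ω | TD < orderStat T K ω}).toReal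
          + (1 / (N : ℝ)) * ∑ h ∈ Finset.Icc 1 K, (P {ω | TD < orderStat T h ω}).toReal := by
  set a : ℕ → ℝ := fun j => (μ {x | x ≤ TD} ^ j * μ {x | ¬x ≤ TD} ^ (N - j)).toReal
  have hprob (Q : Finset (Fin N) → Prop) [DecidablePred Q] :
      (P {ω | Q {i | T i ω ≤ TD}}).toReal = ∑ s with Q s, a #s := by
    rw [measure_setOf_filter_of_map_eq_pi (p := (· ≤ TD)) hT hlaw measurableSet_Iic Q,
      ENNReal.toReal_sum fun s _ => by finiteness, Fintype.card_fin]
  have hZ : ∀ h ∈ Icc 1 K, (P {ω | TD < orderStat T h ω}).toReal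
      = ∑ j ∈ range h, (N.choose j : ℝ) * a j := by
    intro h hh
    obtain ⟨h_pos, hhK⟩ := mem_Icc.1 hh
    simp_rw [lt_orderStat_iff h_pos (hhK.trans hKN)]
    rw [hprob (#· < h), sum_filter_card_lt, Fintype.card_fin]
    simp only [nsmul_eq_mul]
  have hmin : (P {ω | TD < min (orderStat T K ω) (T n ω)}).toReal
      = ∑ j ∈ range K, ((N - 1).choose j : ℝ) * a j := by
    have hevent : {ω | TD < min (orderStat T K ω) (T n ω)}
        = {ω | #{i | T i ω ≤ TD} < K ∧ n ∉ ({i | T i ω ≤ TD} : Finset (Fin N))} := by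
      ext ω
      simp [lt_orderStat_iff hK hKN]
    rw [hevent, hprob (fun s => #s < K ∧ n ∉ s), sum_filter_card_lt_and_notMem, Fintype.card_fin]
    simp only [nsmul_eq_mul]
  rw [hmin, hZ K (mem_Icc.2 ⟨hK, le_rfl⟩), sum_congr rfl hZ]
  exact sum_range_choose_pred_mul N K hKN a

theorem prob_deadline_lt_min
    {Ω : Type*} [MeasurableSpace Ω] (P : MeasureTheory.Measure Ω) [IsProbabilityMeasure P]
    (N K : ℕ) (hK : 1 ≤ K) (hKN : K ≤ N)
    (μ : MeasureTheory.Measure ℝ) [IsProbabilityMeasure μ] (hμ : ∀ x : ℝ, μ {x} = 0)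
    (T : Fin N → Ω → ℝ) (hT : ∀ i, Measurable (T i)) (n : Fin N) (TD : ℝ)
    (hlaw : MeasureTheory.Measure.map (fun ω i => T i ω) P
      = MeasureTheory.Measure.pi (fun _ : Fin N => μ)) :
    (P {ω | TD < min (orderStat T K ω) (T n ω)}).toReal
      = ((N : ℝ) - K) / N * (P {ω | TD < orderStat T K ω}).toReal
          + (1 / (N : ℝ)) * ∑ h ∈ Finset.Icc 1 K, (P {ω | TD < orderStat T h ω}).toReal :=
  prob_deadline_lt_min_general P N K hK hKN μ T hT n TD hlaw
end

section
/- Let T₁,...,T_N be i.i.d. continuous random variables with order statistics T_N(1) < ... < T_N(N), let T_n be one of them, and let T_D be an independent continuous random variable. Given that device n succeeds (T_n ≤ min{T_D, T_N(K)}), the conditional probability that K receptions happen before the deadline is P(T_N(K) < T_D | T_n ≤ min{T_D, T_N(K)}) = K·R_K / Σ_{h=1}^K R_h, where R_h = P(T_N(h) ≤ T_D). -/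
open MeasureTheory ProbabilityTheory Real

/-!
Pass to the joint law `ν ⊗ μ^N` of the deadline and the reception times. Almost surely the
times are distinct, so each device has a rank `r ∈ {1, …, N}` and the `h`-th order statistic is
the time of the device of rank `h`. Device `n` succeeds iff its rank is some `h ≤ K` and
`T_N(h) ≤ T_D`; given `T_N(K) < T_D`, it succeeds iff its rank is at most `K`. The law is
exchangeable, so on any event that does not see the labels of the devices, device `n` has rank
`h` with probability `1/N` times that of the event. Hence `N · P(success) = ∑_{h ≤ K} R_h`
and `N · P(success, T_N(K) < T_D) = K · P(T_N(K) < T_D) = K · R_K`, the last step because `T_D`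
has no atoms.
-/

open Finset Function
open scoped ENNReal

section Rank

variable {ι α : Type*} [Fintype ι] [LinearOrder α]

def rank (v : ι → α) (i : ι) : ℕ := #{j | v j ≤ v i}

variable {v : ι → α}

lemma card_filter_le_mono {x y : α} (hxy : x ≤ y) : #{j | v j ≤ x} ≤ #{j | v j ≤ y} :=
  card_le_card <| monotone_filter_right _ fun _ _ hj => hj.trans hxy

lemma card_filter_le_lt_rank {x : α} {i : ι} (hx : x < v i) : #{j | v j ≤ x} < rank v i :=
  card_lt_card <| ssubset_iff_of_subset
    (monotone_filter_right _ fun _ _ hj => hj.trans hx.le) |>.2 ⟨i, by simp, by simpa using hx⟩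

lemma rank_le_rank_iff {i j : ι} : rank v i ≤ rank v j ↔ v i ≤ v j :=
  ⟨fun h => not_lt.1 fun hji => (card_filter_le_lt_rank hji).not_ge h, card_filter_le_mono⟩

lemma rank_injective (hv : Injective v) : Injective (rank v) := fun _ _ h =>
  hv <| le_antisymm (rank_le_rank_iff.1 h.le) (rank_le_rank_iff.1 h.ge)

lemma rank_mem_Icc (i : ι) : rank v i ∈ Icc 1 (Fintype.card ι) :=
  mem_Icc.2 ⟨card_pos.2 ⟨i, by simp⟩, card_filter_le _ _⟩

lemma exists_rank_eq (hv : Injective v) {h : ℕ} (hh : h ∈ Icc 1 (Fintype.card ι)) :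
    ∃ i, rank v i = h := by
  classical
  have himage : univ.image (rank v) = Icc 1 (Fintype.card ι) :=
    eq_of_subset_of_card_le
      (fun _ hk => by obtain ⟨i, -, rfl⟩ := mem_image.1 hk; exact rank_mem_Icc i)
      (by rw [Nat.card_Icc, card_image_of_injective _ (rank_injective hv)]; simp)
  rw [← himage] at hh
  simpa using hh

lemma card_filter_comp_perm_le (σ : Equiv.Perm ι) (x : α) :
    #{j | (v ∘ σ) j ≤ x} = #{j | v j ≤ x} :=
  card_equiv σ fun _ => by simp

lemma rank_comp_perm (σ : Equiv.Perm ι) (i : ι) : rank (v ∘ σ) i = rank v (σ i) :=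
  card_filter_comp_perm_le σ _

end Rank

section OrderStat

variable {N : ℕ}

noncomputable def vecOrderStat (K : ℕ) (v : Fin N → ℝ) : ℝ :=
  orderStat (fun i (w : Fin N → ℝ) => w i) K v

lemma vecOrderStat_eq_sInf (K : ℕ) (v : Fin N → ℝ) :
    vecOrderStat K v = sInf {x | K ≤ #{i | v i ≤ x}} := by
  simp only [vecOrderStat, orderStat, Nat.card_eq_fintype_card, Fintype.card_subtype]

variable {K : ℕ} {v : Fin N → ℝ}

lemma isLeast_vecOrderStat (hK : K ∈ Icc 1 N) :
    IsLeast {x | K ≤ #{i | v i ≤ x}} (vecOrderStat K v) := by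
  obtain ⟨hK1, hKN⟩ := mem_Icc.1 hK
  obtain ⟨imax, -, himax⟩ :=
    exists_max_image univ v (univ_nonempty_iff.2 ⟨⟨0, by omega⟩⟩)
  obtain ⟨i₀, hi₀, hmin⟩ := exists_min_image {i | K ≤ rank v i} v
    ⟨imax, mem_filter.2 ⟨mem_univ _, by
      rw [rank, filter_true_of_mem fun j _ => himax j (mem_univ j)]; simpa using hKN⟩⟩
  have hleast : IsLeast {x | K ≤ #{i | v i ≤ x}} (v i₀) := by
    refine ⟨(mem_filter.1 hi₀).2, fun x hx => ?_⟩
    -- the largest coordinate below `x` has rank at least `#{i | v i ≤ x}`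
    obtain ⟨j, hj, hjmax⟩ := exists_max_image {i | v i ≤ x} v
      (card_pos.1 (lt_of_lt_of_le hK1 hx))
    have hjK : K ≤ rank v j := hx.trans <| card_le_card <|
      monotone_filter_right _ fun k _ hk => hjmax k (mem_filter.2 ⟨mem_univ k, hk⟩)
    exact (hmin j (mem_filter.2 ⟨mem_univ j, hjK⟩)).trans (mem_filter.1 hj).2
  rwa [vecOrderStat_eq_sInf, hleast.csInf_eq]

lemma vecOrderStat_le_iff (hK : K ∈ Icc 1 N) {t : ℝ} :
    vecOrderStat K v ≤ t ↔ K ≤ #{i | v i ≤ t} :=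
  ⟨fun h => (isLeast_vecOrderStat hK).1.trans (card_filter_le_mono h),
    fun h => (isLeast_vecOrderStat hK).2 h⟩

lemma vecOrderStat_rank (i : Fin N) : vecOrderStat (rank v i) v = v i := by
  have hK : rank v i ∈ Icc 1 N := by simpa using rank_mem_Icc (v := v) i
  refine le_antisymm ((vecOrderStat_le_iff hK).2 le_rfl) (not_lt.1 fun hlt => ?_)
  exact (card_filter_le_lt_rank hlt).not_ge (isLeast_vecOrderStat hK).1

lemma le_vecOrderStat_iff (hv : Injective v) (hK : K ∈ Icc 1 N) (n : Fin N) :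
    v n ≤ vecOrderStat K v ↔ rank v n ≤ K := by
  obtain ⟨i, rfl⟩ := exists_rank_eq hv (by simpa using hK)
  rw [vecOrderStat_rank, rank_le_rank_iff]

lemma vecOrderStat_comp_perm (σ : Equiv.Perm (Fin N)) (K : ℕ) :
    vecOrderStat K (v ∘ σ) = vecOrderStat K v := by
  simp only [vecOrderStat_eq_sInf, card_filter_comp_perm_le]

end OrderStat

section Measurability

variable {ι X : Type*} [Fintype ι] [MeasurableSpace X]

lemma measurable_card_filter {p : ι → X → Prop} [∀ i x, Decidable (p i x)]
    (hp : ∀ i, MeasurableSet {x | p i x}) : Measurable fun x => #{i | p i x} := by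
  simp_rw [card_filter]
  exact Finset.measurable_sum _ fun i _ => Measurable.ite (hp i) measurable_const measurable_const

lemma measurable_rank (n : ι) : Measurable fun v : ι → ℝ => rank v n :=
  measurable_card_filter fun i => measurableSet_le (measurable_pi_apply i) (measurable_pi_apply n)

lemma measurableSet_injective : MeasurableSet {v : ι → ℝ | Injective v} :=
  measurableSet_setOfPred.2 <| Measurable.forall fun a => Measurable.forall fun b =>
    (measurableSet_setOfPred.1 <|
      measurableSet_eq_fun (measurable_pi_apply a) (measurable_pi_apply b)).imp measurable_const

lemma measurable_vecOrderStat {N : ℕ} (K : ℕ) :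
    Measurable (vecOrderStat K : (Fin N → ℝ) → ℝ) := by
  by_cases hK : K ∈ Icc 1 N
  · refine measurable_of_Iic fun t => ?_
    have hpre : vecOrderStat K ⁻¹' Set.Iic t =
        (fun v : Fin N → ℝ => #{i | v i ≤ t}) ⁻¹' Set.Ici K :=
      Set.ext fun _ => vecOrderStat_le_iff hK
    rw [hpre]
    exact measurable_card_filter
      (fun i => measurableSet_le (measurable_pi_apply i) measurable_const) measurableSet_Ici
  · -- for `K = 0` or `K > N` the set whose infimum is taken does not depend on `v`
    have hconst (v : Fin N → ℝ) : {x | K ≤ #{i | v i ≤ x}} = {_x | K = 0} := by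
      ext x
      have := card_filter_le (univ : Finset (Fin N)) (v · ≤ x)
      simp only [mem_Icc, card_univ, Fintype.card_fin] at hK this
      simp only [Set.mem_ofPred_eq]
      omega
    have : vecOrderStat K = fun _ : Fin N → ℝ => sInf {_x : ℝ | K = 0} := by
      funext v
      rw [vecOrderStat_eq_sInf, hconst]
    rw [this]
    exact measurable_const

end Measurability

section ProductMeasure

variable {ι Z : Type*} [Fintype ι] [MeasurableSpace Z]

lemma prod_measure_setOf_fst_eq_null (ν : Measure ℝ) [SFinite ν] [NullSingletonClass ν]
    (S : Measure Z) [SFinite S] {f : Z → ℝ} (hf : Measurable f) :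
    ν.prod S {p | p.1 = f p.2} = 0 := by
  have hs : MeasurableSet {p : ℝ × Z | p.1 = f p.2} :=
    measurableSet_eq_fun measurable_fst (hf.comp measurable_snd)
  rw [Measure.prod_apply_symm hs]
  simp

lemma measurePreserving_comp_perm {α : Type*} [MeasurableSpace α] (μ : Measure α)
    [SigmaFinite μ] (σ : Equiv.Perm ι) :
    MeasurePreserving (fun v : ι → α => v ∘ σ)
      (Measure.pi fun _ => μ) (Measure.pi fun _ => μ) := by
  convert measurePreserving_piCongrLeft (fun _ : ι => μ) σ.symm using 1
  funext v
  ext i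
  simp [MeasurableEquiv.coe_piCongrLeft, Equiv.piCongrLeft_apply]

lemma ae_injective_pi (μ : Measure ℝ) [IsProbabilityMeasure μ] [NullSingletonClass μ] :
    ∀ᵐ v ∂Measure.pi (fun _ : ι => μ), Injective v := by
  unfold Injective
  refine ae_all_iff.2 fun i => ae_all_iff.2 fun j => ?_
  by_cases hij : i = j
  · exact ae_of_all _ fun _ _ => hij
  have hlaw := ((iIndepFun_pi (μ := fun _ : ι => μ) (X := fun _ => (id : ℝ → ℝ))
    fun _ => aemeasurable_id).indepFun hij).map_prod_eq_prod_map_map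
      (measurable_pi_apply i).aemeasurable (measurable_pi_apply j).aemeasurable
  rw [(measurePreserving_eval _ i).map_eq, (measurePreserving_eval _ j).map_eq] at hlaw
  have hdiag : MeasurableSet {p : ℝ × ℝ | p.1 = id p.2} :=
    measurableSet_eq_fun measurable_fst measurable_snd
  have hnull := prod_measure_setOf_fst_eq_null μ μ measurable_id
  rw [← hlaw, Measure.map_apply (by fun_prop) hdiag] at hnull
  filter_upwards [measure_eq_zero_iff_ae_notMem.1 hnull] with v hv heq using absurd heq hv

end ProductMeasure

section Exchangeability

variable {ι X : Type*} [Fintype ι] [MeasurableSpace X] {Q : Measure (X × (ι → ℝ))}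

lemma measurableSet_rank_snd_eq (n : ι) (h : ℕ) :
    MeasurableSet {p : X × (ι → ℝ) | rank p.2 n = h} :=
  (measurable_rank n).comp measurable_snd (measurableSet_singleton h)

lemma card_mul_measure_inter_rank_eq
    (hQ : ∀ σ : Equiv.Perm ι, MeasurePreserving (Prod.map id (· ∘ σ)) Q Q)
    {s : Set (X × (ι → ℝ))} (hs : MeasurableSet s)
    (hs_perm : ∀ σ : Equiv.Perm ι, Prod.map id (· ∘ σ) ⁻¹' s = s)
    (hs_inj : ∀ p ∈ s, Injective p.2) {h : ℕ} (hh : h ∈ Icc 1 (Fintype.card ι)) (n : ι) :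
    Fintype.card ι * Q (s ∩ {p | rank p.2 n = h}) = Q s := by
  classical
  set E : ι → Set (X × (ι → ℝ)) := fun m => s ∩ {p | rank p.2 m = h}
  have hE (m : ι) : MeasurableSet (E m) := hs.inter (measurableSet_rank_snd_eq m h)
  have hE_eq (m : ι) : Q (E m) = Q (E n) := by
    have hpre : Prod.map id (· ∘ Equiv.swap m n) ⁻¹' E n = E m := by
      rw [Set.preimage_inter, hs_perm]
      ext p
      simp [E, rank_comp_perm]
    rw [← hpre, (hQ _).measure_preimage (hE n).nullMeasurableSet]
  have hunion : ⋃ m, E m = s := Set.iUnion_subset_iff.2 (fun _ => Set.inter_subset_left)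
    |>.antisymm fun p hp => by
      obtain ⟨m, hm⟩ := exists_rank_eq (hs_inj p hp) hh
      exact Set.mem_iUnion.2 ⟨m, hp, hm⟩
  have hdisj : Pairwise (Disjoint on E) := fun m m' hmm' => Set.disjoint_left.2
    fun p hp hp' => hmm' (rank_injective (hs_inj p hp.1) (hp.2.trans hp'.2.symm))
  calc (Fintype.card ι : ℝ≥0∞) * Q (E n) = ∑ m, Q (E m) := by simp [hE_eq]
    _ = Q s := by rw [← hunion, measure_iUnion hdisj hE, tsum_fintype]

lemma card_mul_measure_biUnion_inter_rank_eq
    (hQ : ∀ σ : Equiv.Perm ι, MeasurePreserving (Prod.map id (· ∘ σ)) Q Q)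
    {s : ℕ → Set (X × (ι → ℝ))} (hs : ∀ h, MeasurableSet (s h))
    (hs_perm : ∀ h, ∀ σ : Equiv.Perm ι, Prod.map id (· ∘ σ) ⁻¹' s h = s h)
    (hs_inj : ∀ h, ∀ p ∈ s h, Injective p.2) {K : ℕ} (hK : K ≤ Fintype.card ι) (n : ι) :
    Fintype.card ι * Q (⋃ h ∈ Icc 1 K, s h ∩ {p | rank p.2 n = h}) =
      ∑ h ∈ Icc 1 K, Q (s h) := by
  rw [measure_biUnion_finset, mul_sum]
  · exact sum_congr rfl fun h hh => card_mul_measure_inter_rank_eq hQ (hs h) (hs_perm h)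
      (hs_inj h) (Icc_subset_Icc_right hK hh) n
  · exact fun h _ h' _ hne => Set.disjoint_left.2 fun p hp hp' => hne (hp.2.symm.trans hp'.2)
  · exact fun h _ => (hs h).inter (measurableSet_rank_snd_eq n h)

end Exchangeability

section Model

variable {N K : ℕ} (ν μ : Measure ℝ)

lemma measurePreserving_prodMap_comp_perm [SFinite ν] [SigmaFinite μ] (σ : Equiv.Perm (Fin N)) :
    MeasurePreserving (Prod.map id (· ∘ σ)) (ν.prod (Measure.pi fun _ => μ))
      (ν.prod (Measure.pi fun _ => μ)) :=
  (MeasurePreserving.id ν).prod (measurePreserving_comp_perm μ σ)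

lemma ae_injective_snd [IsProbabilityMeasure μ] [NullSingletonClass μ] :
    ∀ᵐ p ∂ν.prod (Measure.pi fun _ : Fin N => μ), Injective p.2 :=
  Measure.quasiMeasurePreserving_snd.ae (ae_injective_pi μ)

lemma measurableSet_vecOrderStat_le (h : ℕ) :
    MeasurableSet {p : ℝ × (Fin N → ℝ) | vecOrderStat h p.2 ≤ p.1} :=
  measurableSet_le ((measurable_vecOrderStat h).comp measurable_snd) measurable_fst

lemma measurableSet_vecOrderStat_lt (h : ℕ) :
    MeasurableSet {p : ℝ × (Fin N → ℝ) | vecOrderStat h p.2 < p.1} :=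
  measurableSet_lt ((measurable_vecOrderStat h).comp measurable_snd) measurable_fst

lemma measurableSet_le_min_vecOrderStat (n : Fin N) (K : ℕ) :
    MeasurableSet {p : ℝ × (Fin N → ℝ) | p.2 n ≤ min p.1 (vecOrderStat K p.2)} :=
  measurableSet_le ((measurable_pi_apply n).comp measurable_snd)
    (measurable_fst.min ((measurable_vecOrderStat K).comp measurable_snd))

lemma preimage_prodMap_comp_perm_setOf_vecOrderStat (σ : Equiv.Perm (Fin N))
    (r : ℝ → ℝ → Prop) (h : ℕ) :
    Prod.map id (· ∘ σ) ⁻¹'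
        {p : ℝ × (Fin N → ℝ) | r (vecOrderStat h p.2) p.1 ∧ Injective p.2} =
      {p | r (vecOrderStat h p.2) p.1 ∧ Injective p.2} := by
  ext p
  simp only [Set.mem_preimage, Set.mem_ofPred_eq, Prod.map_fst, Prod.map_snd, id_eq,
    vecOrderStat_comp_perm, Equiv.injective_comp]

lemma card_mul_measure_success_eq_sum [SFinite ν] [IsProbabilityMeasure μ]
    [NullSingletonClass μ] (hK : K ∈ Icc 1 N) (n : Fin N) :
    N * ν.prod (Measure.pi fun _ => μ) {p | p.2 n ≤ min p.1 (vecOrderStat K p.2)} =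
      ∑ h ∈ Icc 1 K,
        ν.prod (Measure.pi fun _ : Fin N => μ) {p | vecOrderStat h p.2 ≤ p.1} := by
  set Q := ν.prod (Measure.pi fun _ : Fin N => μ)
  have hinj : Q {p | Injective p.2}ᶜ = 0 := ae_injective_snd ν μ
  have hset : {p : ℝ × (Fin N → ℝ) | p.2 n ≤ min p.1 (vecOrderStat K p.2)} ∩
        {p | Injective p.2} =
      ⋃ h ∈ Icc 1 K,
        {p | vecOrderStat h p.2 ≤ p.1 ∧ Injective p.2} ∩ {p | rank p.2 n = h} := by
    ext p
    simp only [Set.mem_inter_iff, Set.mem_ofPred_eq, Set.mem_iUnion, le_min_iff, exists_prop]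
    constructor
    · rintro ⟨⟨hd, hnK⟩, hinj⟩
      exact ⟨rank p.2 n, mem_Icc.2 ⟨(mem_Icc.1 (rank_mem_Icc n)).1,
        (le_vecOrderStat_iff hinj hK n).1 hnK⟩, ⟨by rwa [vecOrderStat_rank], hinj⟩, rfl⟩
    · rintro ⟨h, hh, ⟨hd, hinj⟩, rfl⟩
      rw [vecOrderStat_rank] at hd
      exact ⟨⟨hd, (le_vecOrderStat_iff hinj hK n).2 (mem_Icc.1 hh).2⟩, hinj⟩
  have hsum := card_mul_measure_biUnion_inter_rank_eq (measurePreserving_prodMap_comp_perm ν μ)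
    (s := fun h => {p | vecOrderStat h p.2 ≤ p.1 ∧ Injective p.2})
    (fun h => (measurableSet_vecOrderStat_le h).inter (measurable_snd measurableSet_injective))
    (fun h σ => preimage_prodMap_comp_perm_setOf_vecOrderStat σ (· ≤ ·) h)
    (fun _ _ hp => hp.2)
    (by simpa using (mem_Icc.1 hK).2) n
  rw [Fintype.card_fin] at hsum
  rw [← measure_inter_conull hinj, hset, hsum]
  exact sum_congr rfl fun h _ => by rw [Set.ofPred_and, measure_inter_conull hinj]

lemma card_mul_measure_success_inter_lt [SFinite ν] [NullSingletonClass ν]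
    [IsProbabilityMeasure μ] [NullSingletonClass μ] (hK : K ∈ Icc 1 N) (n : Fin N) :
    N * ν.prod (Measure.pi fun _ => μ)
        ({p | p.2 n ≤ min p.1 (vecOrderStat K p.2)} ∩ {p | vecOrderStat K p.2 < p.1}) =
      K * ν.prod (Measure.pi fun _ : Fin N => μ) {p | vecOrderStat K p.2 ≤ p.1} := by
  set Q := ν.prod (Measure.pi fun _ : Fin N => μ)
  have hinj : Q {p | Injective p.2}ᶜ = 0 := ae_injective_snd ν μ
  have hset : {p : ℝ × (Fin N → ℝ) | p.2 n ≤ min p.1 (vecOrderStat K p.2)} ∩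
        {p | vecOrderStat K p.2 < p.1} ∩ {p | Injective p.2} =
      ⋃ h ∈ Icc 1 K,
        {p | vecOrderStat K p.2 < p.1 ∧ Injective p.2} ∩ {p | rank p.2 n = h} := by
    ext p
    simp only [Set.mem_inter_iff, Set.mem_ofPred_eq, Set.mem_iUnion, le_min_iff, exists_prop]
    constructor
    · rintro ⟨⟨⟨-, hnK⟩, hlt⟩, hinj⟩
      exact ⟨rank p.2 n, mem_Icc.2 ⟨(mem_Icc.1 (rank_mem_Icc n)).1,
        (le_vecOrderStat_iff hinj hK n).1 hnK⟩, ⟨hlt, hinj⟩, rfl⟩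
    · rintro ⟨h, hh, ⟨hlt, hinj⟩, rfl⟩
      have hnK := (le_vecOrderStat_iff hinj hK n).2 (mem_Icc.1 hh).2
      exact ⟨⟨⟨hnK.trans hlt.le, hnK⟩, hlt⟩, hinj⟩
  have hsum := card_mul_measure_biUnion_inter_rank_eq (measurePreserving_prodMap_comp_perm ν μ)
    (s := fun _ => {p | vecOrderStat K p.2 < p.1 ∧ Injective p.2})
    (fun _ => (measurableSet_vecOrderStat_lt K).inter (measurable_snd measurableSet_injective))
    (fun _ σ => preimage_prodMap_comp_perm_setOf_vecOrderStat σ (· < ·) K) (fun _ _ hp => hp.2)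
    (by simpa using (mem_Icc.1 hK).2) n
  rw [Fintype.card_fin, sum_const, Nat.card_Icc, add_tsub_cancel_right, nsmul_eq_mul] at hsum
  rw [← measure_inter_conull hinj, hset, hsum, Set.ofPred_and, measure_inter_conull hinj]
  -- `<` and `≤` differ only where the deadline hits the order statistic, a null set
  refine congrArg _ (measure_congr ?_)
  filter_upwards [measure_eq_zero_iff_ae_notMem.1
    (prod_measure_setOf_fst_eq_null ν _ (measurable_vecOrderStat K))] with p hp
  exact propext ⟨le_of_lt, fun hle => hle.lt_of_ne fun heq => hp heq.symm⟩

end Model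

theorem cond_prob_orderStat_before_deadline_given_success_general
    {Ω : Type*} [MeasurableSpace Ω] (P : MeasureTheory.Measure Ω)
    (N K : ℕ) (hK : 1 ≤ K) (hKN : K ≤ N)
    (μ ν : MeasureTheory.Measure ℝ) [IsProbabilityMeasure μ] [IsProbabilityMeasure ν]
    (hμ : ∀ x : ℝ, μ {x} = 0) (hν : ∀ x : ℝ, ν {x} = 0)
    (T : Fin N → Ω → ℝ) (hT : ∀ i, Measurable (T i)) (n : Fin N)
    (D : Ω → ℝ) (hD : Measurable D)
    (hlaw : MeasureTheory.Measure.map (fun ω => (D ω, fun i => T i ω)) P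
      = ν.prod (MeasureTheory.Measure.pi (fun _ : Fin N => μ)))
    (R : ℕ → ℝ) (hR : ∀ h, R h = (P {ω | orderStat T h ω ≤ D ω}).toReal) :
    ((P[|{ω | T n ω ≤ min (D ω) (orderStat T K ω)}]) {ω | orderStat T K ω < D ω}).toReal
      = (K : ℝ) * R K / ∑ h ∈ Finset.Icc 1 K, R h := by
  have : NullSingletonClass μ := ⟨hμ⟩
  have : NullSingletonClass ν := ⟨hν⟩
  set Q := ν.prod (Measure.pi fun _ : Fin N => μ)
  set φ : Ω → ℝ × (Fin N → ℝ) := fun ω => (D ω, fun i => T i ω)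
  have hφ : Measurable φ := hD.prodMk (measurable_pi_lambda _ hT)
  have hPQ {s : Set (ℝ × (Fin N → ℝ))} (hs : MeasurableSet s) : P (φ ⁻¹' s) = Q s := by
    rw [← Measure.map_apply hφ hs, hlaw]
  have hRQ (h : ℕ) : R h = (Q {p | vecOrderStat h p.2 ≤ p.1}).toReal :=
    (hR h).trans (congrArg _ (hPQ (measurableSet_vecOrderStat_le h)))
  -- `orderStat T K ω` is by definition `vecOrderStat K (fun i => T i ω)`
  have hA : {ω | T n ω ≤ min (D ω) (orderStat T K ω)} =
      φ ⁻¹' {p | p.2 n ≤ min p.1 (vecOrderStat K p.2)} := rfl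
  have hB : {ω | orderStat T K ω < D ω} = φ ⁻¹' {p | vecOrderStat K p.2 < p.1} := rfl
  have hK' : K ∈ Icc 1 N := mem_Icc.2 ⟨hK, hKN⟩
  have hN : (N : ℝ) ≠ 0 := by norm_cast; omega
  have hsucc := measurableSet_le_min_vecOrderStat n K
  rw [hA, hB, cond_apply (hφ hsucc), ENNReal.toReal_mul, ENNReal.toReal_inv, ← div_eq_inv_mul,
    ← mul_div_mul_left _ _ hN, ← Set.preimage_inter,
    hPQ (hsucc.inter (measurableSet_vecOrderStat_lt K)), hPQ hsucc]
  congr 1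
  · rw [← ENNReal.toReal_natCast, ← ENNReal.toReal_mul,
      card_mul_measure_success_inter_lt ν μ hK' n, ENNReal.toReal_mul, ENNReal.toReal_natCast,
      hRQ]
  · rw [← ENNReal.toReal_natCast, ← ENNReal.toReal_mul,
      card_mul_measure_success_eq_sum ν μ hK' n, ENNReal.toReal_sum fun _ _ => measure_ne_top _ _]
    exact sum_congr rfl fun h _ => (hRQ h).symm

theorem cond_prob_orderStat_before_deadline_given_success
    {Ω : Type*} [MeasurableSpace Ω] (P : MeasureTheory.Measure Ω) [IsProbabilityMeasure P]
    (N K : ℕ) (hK : 1 ≤ K) (hKN : K ≤ N)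
    (μ ν : MeasureTheory.Measure ℝ) [IsProbabilityMeasure μ] [IsProbabilityMeasure ν]
    (hμ : ∀ x : ℝ, μ {x} = 0) (hν : ∀ x : ℝ, ν {x} = 0)
    (T : Fin N → Ω → ℝ) (hT : ∀ i, Measurable (T i)) (n : Fin N)
    (D : Ω → ℝ) (hD : Measurable D)
    (hlaw : MeasureTheory.Measure.map (fun ω => (D ω, fun i => T i ω)) P
      = ν.prod (MeasureTheory.Measure.pi (fun _ : Fin N => μ)))
    (R : ℕ → ℝ) (hR : ∀ h, R h = (P {ω | orderStat T h ω ≤ D ω}).toReal) :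
    ((P[|{ω | T n ω ≤ min (D ω) (orderStat T K ω)}]) {ω | orderStat T K ω < D ω}).toReal
      = (K : ℝ) * R K / ∑ h ∈ Finset.Icc 1 K, R h :=
  cond_prob_orderStat_before_deadline_given_success_general P N K hK hKN μ ν hμ hν T hT n D hD hlaw
    R hR
end
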